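/- (Optimality of the ⋆M-orthogonal projection.) Let M₃,…,M_p be invertible with each M_k = c_k W_k, c_k ≠ 0 and W_k orthogonal. Let U ∈ ℝ^{n₁×k×n₃×⋯×n_p} satisfy Uᵀ ⋆M U = I (the k×k ⋆M-identity), and let T ∈ ℝ^{n₁×1×n₃×⋯×n_p}. Then the projection P = U ⋆M (Uᵀ ⋆M T) satisfies ‖T − P‖_F ≤ ‖T − U ⋆M C‖_F for every coefficient tensor C ∈ ℝ^{k×1×n₃×⋯×n_p}; that is, P is the closest element of the span of the lateral slices of U to T in the Frobenius norm. -/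

import Mathlib

open Matrix

/-!
Order-`p` real tensors (`p = q + 2`) are represented as families of frontal
slices: a tensor `A ∈ ℝ^{n₁ × n₂ × n₃ × ⋯ × n_p}` is a function
`A : TI m → Matrix (Fin n₁) (Fin n₂) ℝ`, where `TI m = ∀ k : Fin q, Fin (m k)`
is the trailing multi-index `(i₃, …, i_p)` and `A i` is the frontal slice
`A(:,:,i₃,…,i_p)`.
-/

namespace TSVDM

variable {q : ℕ} {m : Fin q → ℕ}

/-- Trailing multi-index `(i₃, …, i_p)`. -/
abbrev TI (m : Fin q → ℕ) : Type := ∀ k, Fin (m k)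

/-- Transform-domain tensor `Â = A ×₃ M₃ ×₄ M₄ ⋯ ×_p M_p`
(mode-`k` products along all trailing modes). -/
noncomputable def hat (M : ∀ k, Matrix (Fin (m k)) (Fin (m k)) ℝ) {a b : Type}
    (A : TI m → Matrix a b ℝ) : TI m → Matrix a b ℝ :=
  fun i => ∑ j : TI m, (∏ k, M k (i k) (j k)) • A j

/-- Inverse transform `×₃ M₃⁻¹ ×₄ M₄⁻¹ ⋯ ×_p M_p⁻¹`. -/
noncomputable def unhat (M : ∀ k, Matrix (Fin (m k)) (Fin (m k)) ℝ) {a b : Type}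
    (A : TI m → Matrix a b ℝ) : TI m → Matrix a b ℝ :=
  fun i => ∑ j : TI m, (∏ k, (M k)⁻¹ (i k) (j k)) • A j

/-- The `⋆M`-product: `A ⋆M B = (Â △ B̂) ×₃ M₃⁻¹ ⋯ ×_p M_p⁻¹`, where `△` is the
facewise product (slice-wise matrix multiplication). -/
noncomputable def starM (M : ∀ k, Matrix (Fin (m k)) (Fin (m k)) ℝ)
    {a b c : Type} [Fintype b]
    (A : TI m → Matrix a b ℝ) (B : TI m → Matrix b c ℝ) : TI m → Matrix a c ℝ :=
  unhat M (fun i => hat M A i * hat M B i)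

/-- The `⋆M`-transpose: transpose every transform-domain frontal slice. -/
noncomputable def transM (M : ∀ k, Matrix (Fin (m k)) (Fin (m k)) ℝ) {a b : Type}
    (A : TI m → Matrix a b ℝ) : TI m → Matrix b a ℝ :=
  unhat M (fun i => (hat M A i)ᵀ)

/-- The `⋆M`-identity: all transform-domain frontal slices equal the identity matrix. -/
noncomputable def idM (M : ∀ k, Matrix (Fin (m k)) (Fin (m k)) ℝ)
    (a : Type) [DecidableEq a] : TI m → Matrix a a ℝ :=
  unhat M (fun _ => (1 : Matrix a a ℝ))

/-- `Q` is `⋆M`-orthogonal if `Qᵀ ⋆M Q = Q ⋆M Qᵀ = I`. -/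
def IsStarMOrthogonal (M : ∀ k, Matrix (Fin (m k)) (Fin (m k)) ℝ)
    {a : Type} [Fintype a] [DecidableEq a] (Q : TI m → Matrix a a ℝ) : Prop :=
  starM M (transM M Q) Q = idM M a ∧ starM M Q (transM M Q) = idM M a

/-- Frobenius norm of a tensor. -/
noncomputable def frob {a b : Type} [Fintype a] [Fintype b]
    (A : TI m → Matrix a b ℝ) : ℝ :=
  Real.sqrt (∑ i : TI m, ∑ r : a, ∑ c : b, A i r c ^ 2)

/-- Diagonal position `(j, j)`: row index. -/
def dIdx₁ {n₁ n₂ : ℕ} (j : Fin (min n₁ n₂)) : Fin n₁ :=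
  ⟨j.1, lt_of_lt_of_le j.2 (Nat.min_le_left n₁ n₂)⟩

/-- Diagonal position `(j, j)`: column index. -/
def dIdx₂ {n₁ n₂ : ℕ} (j : Fin (min n₁ n₂)) : Fin n₂ :=
  ⟨j.1, lt_of_lt_of_le j.2 (Nat.min_le_right n₁ n₂)⟩

/-- `A = U ⋆M S ⋆M Vᵀ` is a t-SVDM of `A`: `U`, `V` are `⋆M`-orthogonal, `S` is
f-diagonal (each transform-domain frontal slice is diagonal), and the diagonal
entries of each frontal slice of `Ŝ` are nonnegative and in descending order. -/
structure IsTSVDM (M : ∀ k, Matrix (Fin (m k)) (Fin (m k)) ℝ) {n₁ n₂ : ℕ}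
    (A : TI m → Matrix (Fin n₁) (Fin n₂) ℝ)
    (U : TI m → Matrix (Fin n₁) (Fin n₁) ℝ)
    (S : TI m → Matrix (Fin n₁) (Fin n₂) ℝ)
    (V : TI m → Matrix (Fin n₂) (Fin n₂) ℝ) : Prop where
  decomp : A = starM M (starM M U S) (transM M V)
  orthU : IsStarMOrthogonal M U
  orthV : IsStarMOrthogonal M V
  fdiag : ∀ (i : TI m) (a : Fin n₁) (b : Fin n₂), (a : ℕ) ≠ (b : ℕ) → hat M S i a b = 0
  nonneg : ∀ (i : TI m) (j : Fin (min n₁ n₂)), 0 ≤ hat M S i (dIdx₁ j) (dIdx₂ j)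
  descend : ∀ (i : TI m) (j j' : Fin (min n₁ n₂)), j ≤ j' →
    hat M S i (dIdx₁ j') (dIdx₂ j') ≤ hat M S i (dIdx₁ j) (dIdx₂ j)

/-- The `(j,j)`-singular tube of `S`, as a function of the trailing multi-index. -/
def tube {n₁ n₂ : ℕ} (S : TI m → Matrix (Fin n₁) (Fin n₂) ℝ)
    (j : Fin (min n₁ n₂)) : TI m → ℝ :=
  fun i => S i (dIdx₁ j) (dIdx₂ j)

/-- Frobenius norm of the `(j,j)`-singular tube of `S`. -/
noncomputable def tubeNorm {n₁ n₂ : ℕ} (S : TI m → Matrix (Fin n₁) (Fin n₂) ℝ)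
    (j : Fin (min n₁ n₂)) : ℝ :=
  Real.sqrt (∑ i : TI m, tube S j i ^ 2)

/-- `r` is the t-rank: the number of nonzero singular tubes (tubes `s₁,…,s_r`
are nonzero and the remaining ones vanish). -/
def HasTRank {n₁ n₂ : ℕ} (S : TI m → Matrix (Fin n₁) (Fin n₂) ℝ) (r : ℕ) : Prop :=
  ∀ j : Fin (min n₁ n₂), ((j : ℕ) < r ↔ tube S j ≠ 0)

/-- Keep only the first `k` lateral slices (columns of each frontal slice). -/
def truncCols {n k : ℕ} (hk : k ≤ n) {a : Type}
    (U : TI m → Matrix a (Fin n) ℝ) : TI m → Matrix a (Fin k) ℝ :=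
  fun i => Matrix.of fun r c => U i r (Fin.castLE hk c)

/-- Keep only the leading `k × k` block of each frontal slice. -/
def truncBlock {n₁ n₂ k : ℕ} (h₁ : k ≤ n₁) (h₂ : k ≤ n₂)
    (S : TI m → Matrix (Fin n₁) (Fin n₂) ℝ) : TI m → Matrix (Fin k) (Fin k) ℝ :=
  fun i => Matrix.of fun a b => S i (Fin.castLE h₁ a) (Fin.castLE h₂ b)

/-- The t-rank-`k` truncation `A_k = U_k ⋆M S_k ⋆M V_kᵀ`. -/
noncomputable def truncApprox (M : ∀ k, Matrix (Fin (m k)) (Fin (m k)) ℝ)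
    {n₁ n₂ : ℕ} (U : TI m → Matrix (Fin n₁) (Fin n₁) ℝ)
    (S : TI m → Matrix (Fin n₁) (Fin n₂) ℝ)
    (V : TI m → Matrix (Fin n₂) (Fin n₂) ℝ) (k : ℕ) (hk : k ≤ min n₁ n₂) :
    TI m → Matrix (Fin n₁) (Fin n₂) ℝ :=
  starM M
    (starM M (truncCols (le_trans hk (Nat.min_le_left _ _)) U)
      (truncBlock (le_trans hk (Nat.min_le_left _ _)) (le_trans hk (Nat.min_le_right _ _)) S))
    (transM M (truncCols (le_trans hk (Nat.min_le_right _ _)) V))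

/-- The `j`-th lateral slice `A(:,j,:,…,:)`, as an `n₁ × 1 × n₃ × ⋯ × n_p` tensor. -/
def lateral {n₁ n₂ : ℕ} (A : TI m → Matrix (Fin n₁) (Fin n₂) ℝ) (j : Fin n₂) :
    TI m → Matrix (Fin n₁) (Fin 1) ℝ :=
  fun i => Matrix.of fun r _ => A i r j

/-- The `(j,j)`-singular tube of `S` regarded as a `1 × 1 × n₃ × ⋯ × n_p` tensor. -/
def tubeT {n₁ n₂ : ℕ} (S : TI m → Matrix (Fin n₁) (Fin n₂) ℝ)
    (j : Fin (min n₁ n₂)) : TI m → Matrix (Fin 1) (Fin 1) ℝ :=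
  fun i => Matrix.of fun _ _ => S i (dIdx₁ j) (dIdx₂ j)


end TSVDM

/-!
Write `M k = c k • W k` with `W k` orthogonal. Then the transform `A ↦ Â` multiplies the squared
Frobenius norm by `∏ k, c k ^ 2` (Parseval) and turns `⋆M`-products into facewise products, so the
claim reduces to one frontal slice at a time. There `Ûᵢ` has orthonormal columns, the residual
`T̂ᵢ - ÛᵢÛᵢᵀT̂ᵢ` is orthogonal to the column space of `Ûᵢ`, and Pythagoras gives
`‖T̂ᵢ - ÛᵢĈᵢ‖² = ‖T̂ᵢ - ÛᵢÛᵢᵀT̂ᵢ‖² + ‖ÛᵢᵀT̂ᵢ - Ĉᵢ‖²`.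
-/

lemma Matrix.trace_transpose_mul_self_nonneg {R n c : Type*} [CommRing R] [LinearOrder R]
    [IsStrictOrderedRing R] [Fintype n] [Fintype c] (X : Matrix n c R) : 0 ≤ (Xᵀ * X).trace := by
  rw [← vec_dotProduct_vec]
  exact Finset.sum_nonneg fun _ _ => mul_self_nonneg _

lemma Matrix.sum_sum_sq_eq_trace {R n c : Type*} [CommRing R] [Fintype n] [Fintype c]
    (X : Matrix n c R) : ∑ r, ∑ s, X r s ^ 2 = (Xᵀ * X).trace := by
  rw [← vec_dotProduct_vec, dotProduct, ← Finset.univ_product_univ, Finset.sum_product,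
    Finset.sum_comm]
  simp only [vec, sq]

lemma Matrix.sum_mulVec_sq_of_transpose_mul_self {R ι : Type*} [CommRing R] [Fintype ι]
    [DecidableEq ι] {K : Matrix ι ι R} {s : R} (hK : Kᵀ * K = s • 1) (v : ι → R) :
    ∑ i, (K *ᵥ v) i ^ 2 = s * ∑ i, v i ^ 2 := by
  have h : (K *ᵥ v) ⬝ᵥ (K *ᵥ v) = s * (v ⬝ᵥ v) := by
    rw [dotProduct_mulVec, ← mulVec_transpose, mulVec_mulVec, hK, smul_mulVec,
      one_mulVec, dotProduct_comm, dotProduct_smul, smul_eq_mul]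
  simpa only [dotProduct, sq] using h

lemma Matrix.isUnit_det_smul_of_transpose_mul_self {K n : Type*} [Field K] [Fintype n]
    [DecidableEq n] {W : Matrix n n K} (hW : Wᵀ * W = 1) {c : K} (hc : c ≠ 0) :
    IsUnit (c • W).det :=
  isUnit_det_of_left_inverse (B := c⁻¹ • Wᵀ) <| by
    rw [smul_mul_smul, hW, inv_mul_cancel₀ hc, one_smul]

lemma Matrix.smul_transpose_mul_smul_self {R n : Type*} [CommRing R] [Fintype n]
    [DecidableEq n] {W : Matrix n n R} (hW : Wᵀ * W = 1) (c : R) :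
    (c • W)ᵀ * (c • W) = c ^ 2 • 1 := by
  rw [transpose_smul, smul_mul_smul, hW, sq]

lemma Matrix.trace_sq_sub_proj_le {R n k c : Type*} [CommRing R] [LinearOrder R]
    [IsStrictOrderedRing R] [Fintype n] [Fintype k] [Fintype c] [DecidableEq k]
    {u : Matrix n k R} (hu : uᵀ * u = 1) (t : Matrix n c R) (d : Matrix k c R) :
    ((t - u * (uᵀ * t))ᵀ * (t - u * (uᵀ * t))).trace ≤ ((t - u * d)ᵀ * (t - u * d)).trace := by
  set a := t - u * (uᵀ * t)
  set e := uᵀ * t - d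
  have hua : uᵀ * a = 0 := by
    simp only [a, Matrix.mul_sub, ← Matrix.mul_assoc, hu, Matrix.one_mul, sub_self]
  have hau : aᵀ * u = 0 := by
    rw [← transpose_transpose u, ← transpose_mul, hua, transpose_zero]
  have hsplit : t - u * d = a + u * e := by
    simp only [a, e, Matrix.mul_sub]; abel
  have pythagoras : (t - u * d)ᵀ * (t - u * d) = aᵀ * a + eᵀ * e := by
    rw [hsplit, transpose_add, transpose_mul, Matrix.add_mul, Matrix.mul_add, Matrix.mul_add,
      ← Matrix.mul_assoc, hau, Matrix.mul_assoc eᵀ, hua, ← Matrix.mul_assoc, Matrix.mul_assoc eᵀ,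
      hu]
    simp
  rw [pythagoras, trace_add]
  exact le_add_of_nonneg_right (trace_transpose_mul_self_nonneg e)

namespace TSVDM

variable {q : ℕ} {m : Fin q → ℕ}

/-- The transform `hat M` acts on every tube by this matrix, the Kronecker product of the `M k`. -/
def piKronecker (M : ∀ k, Matrix (Fin (m k)) (Fin (m k)) ℝ) : Matrix (TI m) (TI m) ℝ :=
  Matrix.of fun i j => ∏ k, M k (i k) (j k)

lemma piKronecker_mul (M N : ∀ k, Matrix (Fin (m k)) (Fin (m k)) ℝ) :
    piKronecker M * piKronecker N = piKronecker fun k => M k * N k := by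
  ext i l
  simp only [piKronecker, mul_apply, of_apply, ← Finset.prod_mul_distrib]
  exact (Fintype.prod_sum fun k x => M k (i k) x * N k x (l k)).symm

lemma piKronecker_one : piKronecker (fun k => (1 : Matrix (Fin (m k)) (Fin (m k)) ℝ)) = 1 := by
  ext i l
  by_cases h : i = l
  · simp [piKronecker, h, one_apply]
  · obtain ⟨k, hk⟩ : ∃ k, i k ≠ l k := Function.ne_iff.mp h
    simp only [piKronecker, of_apply, one_apply_ne h]
    exact Finset.prod_eq_zero (Finset.mem_univ k) (one_apply_ne hk)

lemma piKronecker_transpose (M : ∀ k, Matrix (Fin (m k)) (Fin (m k)) ℝ) :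
    (piKronecker M)ᵀ = piKronecker fun k => (M k)ᵀ := rfl

lemma piKronecker_smul (c : Fin q → ℝ) (M : ∀ k, Matrix (Fin (m k)) (Fin (m k)) ℝ) :
    piKronecker (fun k => c k • M k) = (∏ k, c k) • piKronecker M := by
  ext i j
  simp [piKronecker, Finset.prod_mul_distrib]

lemma hat_apply (M : ∀ k, Matrix (Fin (m k)) (Fin (m k)) ℝ) {a b : Type}
    (A : TI m → Matrix a b ℝ) (i : TI m) : hat M A i = ∑ j, piKronecker M i j • A j := rfl

lemma hat_apply_apply (M : ∀ k, Matrix (Fin (m k)) (Fin (m k)) ℝ) {a b : Type}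
    (A : TI m → Matrix a b ℝ) (i : TI m) (r : a) (s : b) :
    hat M A i r s = (piKronecker M *ᵥ fun j => A j r s) i := by
  simp [hat_apply, mulVec, dotProduct, Matrix.sum_apply]

lemma unhat_eq_hat_inv (M : ∀ k, Matrix (Fin (m k)) (Fin (m k)) ℝ) {a b : Type}
    (A : TI m → Matrix a b ℝ) : unhat M A = hat (fun k => (M k)⁻¹) A := rfl

lemma hat_hat (M N : ∀ k, Matrix (Fin (m k)) (Fin (m k)) ℝ) {a b : Type}
    (A : TI m → Matrix a b ℝ) : hat M (hat N A) = hat (fun k => M k * N k) A := by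
  funext i
  simp only [hat_apply, ← piKronecker_mul, mul_apply, Finset.smul_sum, smul_smul, Finset.sum_smul]
  exact Finset.sum_comm

lemma hat_one {a b : Type} (A : TI m → Matrix a b ℝ) :
    hat (fun k => (1 : Matrix (Fin (m k)) (Fin (m k)) ℝ)) A = A := by
  funext i
  simp [hat_apply, piKronecker_one, one_apply, ite_smul]

lemma hat_unhat {M : ∀ k, Matrix (Fin (m k)) (Fin (m k)) ℝ} (hM : ∀ k, IsUnit (M k).det)
    {a b : Type} (A : TI m → Matrix a b ℝ) : hat M (unhat M A) = A := by
  simp only [unhat_eq_hat_inv, hat_hat, mul_nonsing_inv _ (hM _), hat_one]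

lemma hat_sub (M : ∀ k, Matrix (Fin (m k)) (Fin (m k)) ℝ) {a b : Type}
    (A B : TI m → Matrix a b ℝ) : hat M (A - B) = hat M A - hat M B := by
  funext i
  simp [hat_apply, smul_sub, Finset.sum_sub_distrib]

lemma hat_starM {M : ∀ k, Matrix (Fin (m k)) (Fin (m k)) ℝ} (hM : ∀ k, IsUnit (M k).det)
    {a b c : Type} [Fintype b] (A : TI m → Matrix a b ℝ) (B : TI m → Matrix b c ℝ) :
    hat M (starM M A B) = fun i => hat M A i * hat M B i :=
  hat_unhat hM _

lemma hat_transM {M : ∀ k, Matrix (Fin (m k)) (Fin (m k)) ℝ} (hM : ∀ k, IsUnit (M k).det)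
    {a b : Type} (A : TI m → Matrix a b ℝ) : hat M (transM M A) = fun i => (hat M A i)ᵀ :=
  hat_unhat hM _

lemma hat_idM {M : ∀ k, Matrix (Fin (m k)) (Fin (m k)) ℝ} (hM : ∀ k, IsUnit (M k).det)
    (a : Type) [DecidableEq a] : hat M (idM M a) = fun _ => (1 : Matrix a a ℝ) :=
  hat_unhat hM _

def frobSq {a b : Type} [Fintype a] [Fintype b] (A : TI m → Matrix a b ℝ) : ℝ :=
  ∑ i, ∑ r, ∑ l, A i r l ^ 2

lemma frob_eq_sqrt_frobSq {a b : Type} [Fintype a] [Fintype b] (A : TI m → Matrix a b ℝ) :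
    frob A = √(frobSq A) := rfl

lemma frobSq_eq_sum_trace {a b : Type} [Fintype a] [Fintype b] (A : TI m → Matrix a b ℝ) :
    frobSq A = ∑ i, ((A i)ᵀ * A i).trace := by
  simp only [frobSq, sum_sum_sq_eq_trace]

lemma frobSq_eq_sum_tubes {a b : Type} [Fintype a] [Fintype b] (A : TI m → Matrix a b ℝ) :
    frobSq A = ∑ r, ∑ l, ∑ i, A i r l ^ 2 := by
  rw [frobSq, Finset.sum_comm]
  exact Finset.sum_congr rfl fun _ _ => Finset.sum_comm

lemma frobSq_hat {M : ∀ k, Matrix (Fin (m k)) (Fin (m k)) ℝ} {s : Fin q → ℝ}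
    (hM : ∀ k, (M k)ᵀ * M k = s k • 1) {a b : Type} [Fintype a] [Fintype b]
    (A : TI m → Matrix a b ℝ) : frobSq (hat M A) = (∏ k, s k) * frobSq A := by
  have hK : (piKronecker M)ᵀ * piKronecker M = (∏ k, s k) • 1 := by
    simp only [piKronecker_transpose, piKronecker_mul, hM, piKronecker_smul, piKronecker_one]
  simp only [frobSq_eq_sum_tubes, hat_apply_apply, sum_mulVec_sq_of_transpose_mul_self hK,
    Finset.mul_sum]

/-- (Optimality of the `⋆M`-orthogonal projection.)
If `Uᵀ ⋆M U = I` then the projection `P = U ⋆M Uᵀ ⋆M T` is the closest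
t-linear combination of the lateral slices of `U` to `T`:
`‖T − P‖_F ≤ ‖T − U ⋆M C‖_F` for every coefficient tensor `C`. -/
theorem starM_projection_optimal {q : ℕ} {m : Fin q → ℕ}
    (M : ∀ k, Matrix (Fin (m k)) (Fin (m k)) ℝ)
    (c : Fin q → ℝ) (W : ∀ k, Matrix (Fin (m k)) (Fin (m k)) ℝ)
    (hc : ∀ k, c k ≠ 0)
    (hW : ∀ k, W k * (W k)ᵀ = 1 ∧ (W k)ᵀ * W k = 1)
    (hM : ∀ k, M k = c k • W k)
    {n₁ k : ℕ} (U : TI m → Matrix (Fin n₁) (Fin k) ℝ)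
    (hU : starM M (transM M U) U = idM M (Fin k))
    (T : TI m → Matrix (Fin n₁) (Fin 1) ℝ) :
    ∀ C : TI m → Matrix (Fin k) (Fin 1) ℝ,
      frob (T - starM M U (starM M (transM M U) T)) ≤ frob (T - starM M U C) := by
  intro C
  have hMunit : ∀ k, IsUnit (M k).det := fun k =>
    hM k ▸ isUnit_det_smul_of_transpose_mul_self (hW k).2 (hc k)
  have hMorth : ∀ k, (M k)ᵀ * M k = c k ^ 2 • 1 := fun k =>
    hM k ▸ smul_transpose_mul_smul_self (hW k).2 (c k)
  have hUhat : ∀ i, (hat M U i)ᵀ * hat M U i = 1 := fun i => by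
    simpa only [hat_starM hMunit, hat_transM hMunit, hat_idM hMunit]
      using congrFun (congrArg (hat M) hU) i
  have hscale : 0 < ∏ k, c k ^ 2 := Finset.prod_pos fun k _ => pow_two_pos_of_ne_zero (hc k)
  rw [frob_eq_sqrt_frobSq, frob_eq_sqrt_frobSq]
  refine Real.sqrt_le_sqrt (le_of_mul_le_mul_left ?_ hscale)
  rw [← frobSq_hat hMorth, ← frobSq_hat hMorth, frobSq_eq_sum_trace, frobSq_eq_sum_trace]
  simp only [hat_sub, hat_starM hMunit, hat_transM hMunit, Pi.sub_apply]
  exact Finset.sum_le_sum fun i _ => trace_sq_sub_proj_le (hUhat i) _ _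

end TSVDM
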